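/- Let H be a real Hilbert space, let f : H → ℝ ∪ {+∞} be a proper lower semicontinuous convex function (f ∈ Γ₀(H)), let ε > 0 and x ∈ H, and let p = prox_{εf}(x) be the unique minimizer over y ∈ H of f(y) + ‖x−y‖²/(2ε). Then the Moreau envelope ^εf is Fréchet differentiable at x with derivative ∇^εf(x) = ε⁻¹ (x − p): that is, ^εf(x + h) = ^εf(x) + ⟨ε⁻¹(x − p), h⟩ + o(‖h‖) as h → 0 in H. -/

import Mathlib

/-! With `φ = ε⁻¹ • (x - p)`, comparing the prox objective at `p` with its value at the points
`p + t • (y - p)` and using convexity of `f` gives, as `t → 0⁺`, the subgradient inequality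
`f y ≥ f p + ⟪φ, y - p⟫`. The envelope is therefore squeezed between the envelope of this affine
minorant, `f p + ⟪φ, z - p⟫ - ε ‖φ‖² / 2`, and the infimand at `y = p`,
`f p + ‖z - p‖² / (2ε)`. At `z = x + h` these bounds are `ᵉf(x) + ⟪φ, h⟫` and
`ᵉf(x) + ⟪φ, h⟫ + ‖h‖² / (2ε)`, so `ᵉf` is differentiable at `x` with gradient `φ`. -/

noncomputable section
open Filter Topology Pointwise

variable {H : Type*} [NormedAddCommGroup H] [InnerProductSpace ℝ H] [CompleteSpace H]

/-- An extended-real-valued function `f : H → ℝ ∪ {+∞}` (i.e. never `-∞`) is *proper*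
if it is finite at at least one point. -/
def EProper (f : H → EReal) : Prop := (∀ x, f x ≠ ⊥) ∧ (∃ x, f x ≠ ⊤)

/-- The infimal convolution `(f □ g)(x) = ⨅_{y} (f y + g (x - y))`. -/
def infConv (f g : H → EReal) (x : H) : EReal := ⨅ y : H, f y + g (x - y)

/-- The convex conjugate `f*(φ) = ⨆_{x} (⟨φ, x⟩ - f x)`. -/
def conj (f : H → EReal) (φ : H) : EReal := ⨆ x : H, ((inner ℝ φ x : ℝ) : EReal) - f x

/-- Convexity of an extended-real-valued function (extended-real arithmetic). -/
def EConvexOn (f : H → EReal) : Prop :=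
  ∀ x y : H, ∀ t : ℝ, 0 < t → t < 1 →
    f (t • x + (1 - t) • y) ≤ (t : EReal) * f x + ((1 - t : ℝ) : EReal) * f y

/-- Strict convexity: strict inequality whenever `x ≠ y` and both values are finite. -/
def EStrictConvexOn (f : H → EReal) : Prop :=
  ∀ x y : H, x ≠ y → f x ≠ ⊤ → f y ≠ ⊤ → ∀ t : ℝ, 0 < t → t < 1 →
    f (t • x + (1 - t) • y) < (t : EReal) * f x + ((1 - t : ℝ) : EReal) * f y

/-- `f` is coercive: `f x → +∞` as `‖x‖ → +∞`. -/
def ECoercive (f : H → EReal) : Prop :=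
  ∀ M : ℝ, ∃ R : ℝ, ∀ x : H, R ≤ ‖x‖ → (M : EReal) ≤ f x

/-- `f` is supercoercive: `f x / ‖x‖ → +∞` as `‖x‖ → +∞`. -/
def ESupercoercive (f : H → EReal) : Prop :=
  ∀ M : ℝ, ∃ R : ℝ, ∀ x : H, R ≤ ‖x‖ → ((M * ‖x‖ : ℝ) : EReal) ≤ f x

/-- The Moreau envelope `ᵉf(x) = ⨅_{y} (f y + ‖x - y‖² / (2ε))`. -/
def moreau (ε : ℝ) (f : H → EReal) (x : H) : EReal :=
  ⨅ y : H, f y + ((‖x - y‖ ^ 2 / (2 * ε) : ℝ) : EReal)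

/-- `p` is a minimizer of `y ↦ f y + ‖x - y‖²/(2ε)`, i.e. a proximal point of `f` at `x`. -/
def IsProx (ε : ℝ) (f : H → EReal) (x p : H) : Prop :=
  ∀ y : H, f p + ((‖x - p‖ ^ 2 / (2 * ε) : ℝ) : EReal)
    ≤ f y + ((‖x - y‖ ^ 2 / (2 * ε) : ℝ) : EReal)

/-- The subdifferential `∂f(p) = {φ : f p finite and ∀ y, f y ≥ f p + ⟨φ, y - p⟩}`. -/
def subdiff (f : H → EReal) (p : H) : Set H :=
  {φ : H | f p ≠ ⊤ ∧ ∀ y : H, f p + ((inner ℝ φ (y - p) : ℝ) : EReal) ≤ f y}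


open scoped RealInnerProductSpace

lemma hasFDerivAt_of_norm_sub_le_mul_sq {E F : Type*} [NormedAddCommGroup E] [NormedSpace ℝ E]
    [NormedAddCommGroup F] [NormedSpace ℝ F] {g : E → F} {L : E →L[ℝ] F} {x : E} (C : ℝ)
    (hg : ∀ h, ‖g (x + h) - g x - L h‖ ≤ C * ‖h‖ ^ 2) : HasFDerivAt g L x := by
  rw [hasFDerivAt_iff_isLittleO_nhds_zero]
  refine (Asymptotics.IsBigO.of_bound C (Eventually.of_forall fun h => ?_)).trans_isLittleO
    (Asymptotics.isLittleO_norm_pow_id one_lt_two)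
  simpa using hg h

lemma EReal.toReal_mem_Icc {e : EReal} {l u : ℝ} (he : e ∈ Set.Icc (l : EReal) u) :
    e.toReal ∈ Set.Icc l u := by
  lift e to ℝ using ⟨ne_top_of_le_ne_top (EReal.coe_ne_top u) he.2,
    ne_bot_of_le_ne_bot (EReal.coe_ne_bot l) he.1⟩
  simpa using he

lemma real_inner_le_mul_norm_sq_add {E : Type*} [NormedAddCommGroup E] [InnerProductSpace ℝ E]
    {ε : ℝ} (hε : 0 < ε) (φ w : E) :
    ⟪φ, w⟫ ≤ ε * ‖φ‖ ^ 2 / 2 + ‖w‖ ^ 2 / (2 * ε) := by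
  have h : ε * ‖φ‖ ^ 2 / 2 + ‖w‖ ^ 2 / (2 * ε) - ⟪φ, w⟫ = ‖ε • φ - w‖ ^ 2 / (2 * ε) := by
    rw [norm_sub_sq_real, norm_smul, real_inner_smul_left, mul_pow, Real.norm_eq_abs, sq_abs]
    field_simp
    ring
  linarith [h, div_nonneg (sq_nonneg ‖ε • φ - w‖) (by positivity : (0 : ℝ) ≤ 2 * ε)]

section

variable {E : Type*} [NormedAddCommGroup E] {f : E → EReal} {ε : ℝ} {x p : E}

lemma IsProx.apply_ne_top (hf : EProper f) (hp : IsProx ε f x p) : f p ≠ ⊤ := by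
  obtain ⟨hbot, y, hy⟩ := hf
  intro h
  have := hp y
  rw [h, EReal.top_add_coe, top_le_iff, ← EReal.coe_toReal hy (hbot y), ← EReal.coe_add] at this
  exact EReal.coe_ne_top _ this

variable [InnerProductSpace ℝ E]

lemma IsProx.inner_le_of_convex (hf : EConvexOn f) (hε : 0 < ε) (hp : IsProx ε f x p) {y : E}
    {a b : ℝ} (ha : f p = a) (hb : f y = b) {t : ℝ} (ht₀ : 0 < t) (ht₁ : t < 1) :
    a + ε⁻¹ * ⟪x - p, y - p⟫ ≤ b + t * (‖y - p‖ ^ 2 / (2 * ε)) := by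
  have hseg : x - (t • y + (1 - t) • p) = (x - p) - t • (y - p) := by module
  have key := (hp (t • y + (1 - t) • p)).trans (add_le_add_left (hf y p t ht₀ ht₁) _)
  rw [ha, hb, hseg, ← EReal.coe_mul, ← EReal.coe_mul, ← EReal.coe_add, ← EReal.coe_add,
    ← EReal.coe_add, EReal.coe_le_coe_iff, norm_sub_sq_real (x - p), real_inner_smul_right,
    norm_smul, mul_pow, Real.norm_eq_abs, sq_abs] at key
  field_simp at key
  have hdiv := le_of_mul_le_mul_left
    (by linarith : t * (2 * ε * a + 2 * ⟪x - p, y - p⟫) ≤ t * (2 * ε * b + t * ‖y - p‖ ^ 2)) ht₀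
  field_simp
  linarith

lemma IsProx.smul_sub_mem_subdiff (hf : EConvexOn f) (hbot : ∀ y, f y ≠ ⊥) (hε : 0 < ε)
    (hp : IsProx ε f x p) (hfp : f p ≠ ⊤) : ε⁻¹ • (x - p) ∈ subdiff f p := by
  refine ⟨hfp, fun y => ?_⟩
  rcases eq_or_ne (f y) ⊤ with hy | hy
  · simp [hy]
  obtain ⟨a, ha⟩ : ∃ a : ℝ, f p = a := ⟨_, (EReal.coe_toReal hfp (hbot p)).symm⟩
  obtain ⟨b, hb⟩ : ∃ b : ℝ, f y = b := ⟨_, (EReal.coe_toReal hy (hbot y)).symm⟩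
  rw [ha, hb, ← EReal.coe_add, EReal.coe_le_coe_iff, real_inner_smul_left]
  have hlim : Tendsto (fun t : ℝ => b + t * (‖y - p‖ ^ 2 / (2 * ε))) (𝓝[>] 0) (𝓝 b) := by
    have : Continuous (fun t : ℝ => b + t * (‖y - p‖ ^ 2 / (2 * ε))) := by fun_prop
    simpa using (this.tendsto 0).mono_left nhdsWithin_le_nhds
  refine ge_of_tendsto hlim ?_
  filter_upwards [Ioo_mem_nhdsGT one_pos] with t ⟨ht₀, ht₁⟩
  exact hp.inner_le_of_convex hf hε ha hb ht₀ ht₁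

lemma le_moreau_of_mem_subdiff (hε : 0 < ε) {φ : E} (hφ : φ ∈ subdiff f p) (z : E) :
    f p + ((⟪φ, z - p⟫ - ε * ‖φ‖ ^ 2 / 2 : ℝ) : EReal) ≤ moreau ε f z := by
  refine le_iInf fun y => ?_
  have hsplit : ⟪φ, z - p⟫ = ⟪φ, y - p⟫ + ⟪φ, z - y⟫ := by
    rw [← inner_add_right, sub_add_sub_cancel']
  calc f p + ((⟪φ, z - p⟫ - ε * ‖φ‖ ^ 2 / 2 : ℝ) : EReal)
      ≤ f p + ((⟪φ, y - p⟫ + ‖z - y‖ ^ 2 / (2 * ε) : ℝ) : EReal) := by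
        gcongr
        linarith [real_inner_le_mul_norm_sq_add hε φ (z - y)]
    _ = f p + ((⟪φ, y - p⟫ : ℝ) : EReal) + ((‖z - y‖ ^ 2 / (2 * ε) : ℝ) : EReal) := by
        rw [EReal.coe_add, add_assoc]
    _ ≤ f y + ((‖z - y‖ ^ 2 / (2 * ε) : ℝ) : EReal) := by
        gcongr
        exact hφ.2 y

lemma moreau_add_mem_Icc (hε : 0 < ε) (hφ : ε⁻¹ • (x - p) ∈ subdiff f p) {a : ℝ} (ha : f p = a)
    (h : E) :
    moreau ε f (x + h) ∈ Set.Icc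
      ((a + ‖x - p‖ ^ 2 / (2 * ε) + ⟪ε⁻¹ • (x - p), h⟫ : ℝ) : EReal)
      ((a + ‖x - p‖ ^ 2 / (2 * ε) + ⟪ε⁻¹ • (x - p), h⟫ + ‖h‖ ^ 2 / (2 * ε) : ℝ) : EReal) := by
  have hxh : x + h - p = (x - p) + h := by abel
  have hlow := le_moreau_of_mem_subdiff hε hφ (x + h)
  have hup : moreau ε f (x + h) ≤ f p + ((‖x + h - p‖ ^ 2 / (2 * ε) : ℝ) : EReal) :=
    iInf_le (fun y => f y + ((‖x + h - y‖ ^ 2 / (2 * ε) : ℝ) : EReal)) p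
  rw [ha, ← EReal.coe_add] at hlow hup
  constructor
  · convert hlow using 2
    rw [hxh, inner_add_right, norm_smul, real_inner_smul_left, real_inner_smul_left,
      real_inner_self_eq_norm_sq, Real.norm_eq_abs, abs_of_pos (inv_pos.mpr hε)]
    field_simp
    ring
  · convert hup using 2
    rw [hxh, norm_add_sq_real, real_inner_smul_left]
    field_simp
    ring

end

theorem moreau_deriv_eq_prox_general (f : H → EReal)
    (hf₀ : EProper f) (hf₂ : EConvexOn f) (ε : ℝ) (hε : 0 < ε) (x p : H) (hp : IsProx ε f x p) :
    (∀ z : H, moreau ε f z ≠ ⊤ ∧ moreau ε f z ≠ ⊥) ∧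
    HasFDerivAt (fun z : H => (moreau ε f z).toReal) (innerSL ℝ (ε⁻¹ • (x - p))) x := by
  have hfp : f p ≠ ⊤ := hp.apply_ne_top hf₀
  obtain ⟨a, ha⟩ : ∃ a : ℝ, f p = a := ⟨_, (EReal.coe_toReal hfp (hf₀.1 p)).symm⟩
  have hbounds := moreau_add_mem_Icc hε (hp.smul_sub_mem_subdiff hf₂ hf₀.1 hε hfp) ha
  refine ⟨fun z => ?_, hasFDerivAt_of_norm_sub_le_mul_sq (2 * ε)⁻¹ fun h => ?_⟩
  · obtain ⟨hlow, hup⟩ := add_sub_cancel x z ▸ hbounds (z - x)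
    exact ⟨ne_top_of_le_ne_top (EReal.coe_ne_top _) hup,
      ne_bot_of_le_ne_bot (EReal.coe_ne_bot _) hlow⟩
  · have hx : (moreau ε f x).toReal = a + ‖x - p‖ ^ 2 / (2 * ε) := by
      simpa using EReal.toReal_mem_Icc (hbounds 0)
    obtain ⟨hlow, hup⟩ := EReal.toReal_mem_Icc (hbounds h)
    rw [innerSL_apply_apply, Real.norm_eq_abs, abs_le, hx, ← div_eq_inv_mul]
    constructor <;> linarith [div_nonneg (sq_nonneg ‖h‖) (by positivity : (0 : ℝ) ≤ 2 * ε)]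

theorem moreau_deriv_eq_prox (f : H → EReal)
    (hf₀ : EProper f) (hf₁ : LowerSemicontinuous f) (hf₂ : EConvexOn f) (ε : ℝ) (hε : 0 < ε) (x p : H) (hp : IsProx ε f x p) :
    (∀ z : H, moreau ε f z ≠ ⊤ ∧ moreau ε f z ≠ ⊥) ∧
    HasFDerivAt (fun z : H => (moreau ε f z).toReal) (innerSL ℝ (ε⁻¹ • (x - p))) x :=
  moreau_deriv_eq_prox_general f hf₀ hf₂ ε hε x p hp
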